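/- arXiv:1410.1851 — 5 statements merged into one kernel-verified Lean document; each statement's English description precedes it below -/
import Mathlib

section
/- Let D(t) be the running maximum of a sequence p(t), i.e., D(t) = max_{1≤τ≤t} p(τ). Suppose there is a constant U > 0 such that |p(t+1) − p(t)| ≤ U for all t, and p(1) = D(1) = 0. Then for every t, D(t+1)² − D(t)² ≤ max(p(t+1)² − p(t)², 0) + U². -/
/-- For the running maximum D of a sequence p with p(1)=0 and increments
bounded by U > 0, we have D(t+1)² − D(t)² ≤ max(p(t+1)² − p(t)², 0) + U². -/
theorem running_max_square_increment (p D : ℕ → ℝ) (U : ℝ)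
    (hU : 0 < U) (hp1 : p 1 = 0)
    (hinc : ∀ t, |p (t + 1) - p t| ≤ U)
    (hD : ∀ t, ∀ ht : 1 ≤ t,
      D t = (Finset.Icc 1 t).sup' (Finset.nonempty_Icc.mpr ht) p) :
    ∀ t, 1 ≤ t →
      D (t + 1) ^ 2 - D t ^ 2 ≤ max (p (t + 1) ^ 2 - p t ^ 2) 0 + U ^ 2 := by
  intro t ht
  have hDt := hD t ht
  have hDt1 := hD (t + 1) (le_trans ht (Nat.le_succ t))
  have hins : Finset.Icc 1 (t + 1) = insert (t + 1) (Finset.Icc 1 t) := by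
    ext x; simp [Finset.mem_Icc]; omega
  have hsup : D (t + 1) = p (t + 1) ⊔ D t := by
    rw [hDt1, hDt]
    simp_rw [hins]
    rw [Finset.sup'_insert]
  have h1mem : (1 : ℕ) ∈ Finset.Icc 1 t := by simp [ht]
  have htmem : t ∈ Finset.Icc 1 t := by simp [ht]
  have h0 : 0 ≤ D t := by
    rw [hDt, ← hp1]; exact Finset.le_sup' p h1mem
  have hpt : p t ≤ D t := by rw [hDt]; exact Finset.le_sup' p htmem
  have habs := abs_le.mp (hinc t)
  have hmax0 : (0 : ℝ) ≤ max (p (t + 1) ^ 2 - p t ^ 2) 0 := le_max_right _ _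
  have hmax1 : p (t + 1) ^ 2 - p t ^ 2 ≤ max (p (t + 1) ^ 2 - p t ^ 2) 0 :=
    le_max_left _ _
  rcases le_total (p (t + 1)) (D t) with h | h
  · have : D (t + 1) = D t := by rw [hsup, sup_eq_right.mpr h]
    rw [this]
    nlinarith
  · have hD1 : D (t + 1) = p (t + 1) := by rw [hsup, sup_eq_left.mpr h]
    rw [hD1]
    have hp1nn : 0 ≤ p (t + 1) := le_trans h0 h
    rcases le_or_gt 0 (p t) with hptn | hptn
    · have : p t ^ 2 ≤ D t ^ 2 := by nlinarith
      nlinarith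
    · have hle : p (t + 1) ≤ U := by linarith [habs.2]
      have : p (t + 1) ^ 2 ≤ U ^ 2 := by nlinarith
      nlinarith
end

section
/- Let X₁, X₂, … be i.i.d. integrable real random variables with mean zero. Then there exists a constant C > 0 such that for every n ≥ 0, P(X₁ + ⋯ + Xₙ ≥ 0) ≥ C. -/
/-!
For a centred `Y ∈ L⁴` and `s ≥ 0`, the pointwise inequality
`s²y² + s³y ≤ 2s⁴·1{y ≥ 0} + y⁴` integrates (the linear term has mean zero) to
`s² E[Y²] ≤ 2s⁴ P(Y ≥ 0) + E[Y⁴]`. As a quadratic in `s²` this has nonpositive discriminant,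
so `E[Y²]² ≤ 8 E[Y⁴] P(Y ≥ 0)`. For the partial sum `Sₙ`, independence gives `E[Sₙ²] = n m₂` and
`E[Sₙ⁴] = n m₄ + 3n(n-1) m₂²`; both sides of the bound then scale like `n²`, whence
`P(Sₙ ≥ 0) ≥ m₂² / (8(m₄ + 3m₂²))`. If `m₂ = 0`, every `Sₙ` vanishes almost surely.
-/

open MeasureTheory ProbabilityTheory Finset

lemma sq_mul_sq_add_pow_three_mul_le (y : ℝ) {s : ℝ} (hs : 0 ≤ s) :
    s ^ 2 * y ^ 2 + s ^ 3 * y ≤ 2 * s ^ 4 * (if 0 ≤ y then 1 else 0) + y ^ 4 := by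
  split_ifs with hy
  · nlinarith [sq_nonneg (y ^ 2 - s ^ 2), sq_nonneg (y - s / 2), mul_nonneg (pow_nonneg hs 3) hy]
  · have hy : 0 ≤ -y := by linarith
    rcases le_or_gt (-s) y with hys | hys
    · nlinarith [mul_nonneg (sq_nonneg s) (mul_nonneg hy (neg_le_iff_add_nonneg.1 hys)),
        pow_nonneg (sq_nonneg y) 2]
    · have hsy : s ^ 2 ≤ y ^ 2 := by nlinarith
      nlinarith [mul_le_mul_of_nonneg_right hsy (sq_nonneg y), mul_nonneg (pow_nonneg hs 3) hy]

section Moments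

variable {Ω : Type*} {mΩ : MeasurableSpace Ω} {μ : Measure Ω}

lemma MeasureTheory.MemLp.integrable_pow_of_le [IsFiniteMeasure μ] {Y : Ω → ℝ} {n k : ℕ}
    (hY : MemLp Y n μ) (hk : k ≤ n) : Integrable (fun ω ↦ Y ω ^ k) μ := by
  refine (integrable_norm_iff (hY.1.pow k)).1 ?_
  simpa only [Pi.pow_apply, norm_pow] using
    integrable_norm_pow_of_le hY.1 hk hY.integrable_norm_pow'

lemma ProbabilityTheory.IndepFun.integral_add_pow [IsFiniteMeasure μ] {Y Z : Ω → ℝ}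
    (hYZ : IndepFun Y Z μ) {n : ℕ} (hY : MemLp Y n μ) (hZ : MemLp Z n μ) :
    ∫ ω, (Y ω + Z ω) ^ n ∂μ =
      ∑ k ∈ range (n + 1), (∫ ω, Y ω ^ k ∂μ) * (∫ ω, Z ω ^ (n - k) ∂μ) * n.choose k := by
  have hYZ' (k : ℕ) : IndepFun (fun ω ↦ Y ω ^ k) (fun ω ↦ Z ω ^ (n - k)) μ :=
    hYZ.comp (measurable_id.pow_const k) (measurable_id.pow_const (n - k))
  simp_rw [add_pow]
  rw [integral_finsetSum]
  · refine sum_congr rfl fun k _ ↦ ?_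
    rw [integral_mul_const,
      (hYZ' k).integral_fun_mul_eq_mul_integral (hY.1.pow k) (hZ.1.pow _)]
  · intro k hk
    exact ((hYZ' k).integrable_mul (hY.integrable_pow_of_le (by simp at hk; omega))
      (hZ.integrable_pow_of_le (Nat.sub_le n k))).mul_const _

lemma mul_integral_sq_le_of_integral_eq_zero [IsFiniteMeasure μ] {Y : Ω → ℝ} (hY : MemLp Y 4 μ)
    (hmean : ∫ ω, Y ω ∂μ = 0) {s : ℝ} (hs : 0 ≤ s) :
    s ^ 2 * ∫ ω, Y ω ^ 2 ∂μ ≤ 2 * s ^ 4 * μ.real {ω | 0 ≤ Y ω} + ∫ ω, Y ω ^ 4 ∂μ := by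
  have hA : NullMeasurableSet {ω | 0 ≤ Y ω} μ :=
    nullMeasurableSet_le aemeasurable_const hY.1.aemeasurable
  have hY₁ : Integrable Y μ := by simpa using hY.integrable_pow_of_le (k := 1) (by norm_num)
  have hY₂ := hY.integrable_pow_of_le (k := 2) (by norm_num)
  have hY₄ := hY.integrable_pow_of_le (k := 4) le_rfl
  have hind : Integrable ({ω | 0 ≤ Y ω}.indicator (1 : Ω → ℝ)) μ :=
    (integrable_const 1).indicator₀ hA
  have h : ∫ ω, (s ^ 2 * Y ω ^ 2 + s ^ 3 * Y ω) ∂μ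
      ≤ ∫ ω, (2 * s ^ 4 * {ω | 0 ≤ Y ω}.indicator 1 ω + Y ω ^ 4) ∂μ :=
    integral_mono ((hY₂.const_mul _).add (hY₁.const_mul _)) ((hind.const_mul _).add hY₄)
      fun ω ↦ (sq_mul_sq_add_pow_three_mul_le (Y ω) hs).trans_eq (by simp [Set.indicator_apply])
  rw [integral_add (hY₂.const_mul _) (hY₁.const_mul _), integral_add (hind.const_mul _) hY₄,
    integral_const_mul, integral_const_mul, integral_const_mul, hmean,
    integral_indicator₀ hA] at h
  simpa using h

lemma sq_integral_sq_le_mul_measureReal_nonneg [IsFiniteMeasure μ] {Y : Ω → ℝ}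
    (hY : MemLp Y 4 μ) (hmean : ∫ ω, Y ω ∂μ = 0) :
    (∫ ω, Y ω ^ 2 ∂μ) ^ 2 ≤ 8 * (∫ ω, Y ω ^ 4 ∂μ) * μ.real {ω | 0 ≤ Y ω} := by
  have hquad (x : ℝ) : 0 ≤ 2 * μ.real {ω | 0 ≤ Y ω} * (x * x) + -(∫ ω, Y ω ^ 2 ∂μ) * x
      + ∫ ω, Y ω ^ 4 ∂μ := by
    rcases le_or_gt 0 x with hx | hx
    · have h := mul_integral_sq_le_of_integral_eq_zero hY hmean (Real.sqrt_nonneg x)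
      rw [show √x ^ 4 = (√x ^ 2) ^ 2 by ring, Real.sq_sqrt hx] at h
      linarith
    · have : 0 ≤ ∫ ω, Y ω ^ 2 ∂μ := integral_nonneg fun ω ↦ sq_nonneg _
      have : 0 ≤ ∫ ω, Y ω ^ 4 ∂μ := integral_nonneg fun ω ↦ by positivity
      have : 0 ≤ μ.real {ω | 0 ≤ Y ω} := measureReal_nonneg
      nlinarith
  have h := discrim_le_zero hquad
  rw [discrim] at h
  linarith

lemma measureReal_nonneg_eq_one_of_integral_sq_eq_zero [IsProbabilityMeasure μ] {Y : Ω → ℝ}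
    (hY : MemLp Y 2 μ) (h : ∫ ω, Y ω ^ 2 ∂μ = 0) : μ.real {ω | 0 ≤ Y ω} = 1 := by
  have hY₀ : Y =ᵐ[μ] 0 := by
    filter_upwards [(integral_eq_zero_iff_of_nonneg (fun ω ↦ sq_nonneg (Y ω))
      hY.integrable_sq).1 h] with ω hω
    simpa using hω
  rw [measureReal_def, (mem_ae_iff_prob_eq_one₀
    (nullMeasurableSet_le aemeasurable_const hY.1.aemeasurable)).1]
  · simp
  filter_upwards [hY₀] with ω hω
  simp [hω]

end Moments

section PartialSums

variable {Ω : Type*} {mΩ : MeasurableSpace Ω} {μ : Measure Ω} {X : ℕ → Ω → ℝ}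

lemma integral_sum_range_eq_zero (hident : ∀ i, IdentDistrib (X i) (X 0) μ μ)
    (hX : Integrable (X 0) μ) (hmean : ∫ ω, X 0 ω ∂μ = 0) (n : ℕ) :
    ∫ ω, ∑ i ∈ range n, X i ω ∂μ = 0 := by
  rw [integral_finsetSum _ fun i _ ↦ (hident i).integrable_iff.2 hX]
  exact sum_eq_zero fun i _ ↦ (hident i).integral_eq.trans hmean

lemma memLp_sum_range {p : ℕ} (hident : ∀ i, IdentDistrib (X i) (X 0) μ μ)
    (hX : MemLp (X 0) p μ) (n : ℕ) : MemLp (fun ω ↦ ∑ i ∈ range n, X i ω) p μ :=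
  memLp_finsetSum _ fun i _ ↦ (hident i).memLp_iff.2 hX

lemma ProbabilityTheory.iIndepFun.integral_sum_range_succ_pow [IsFiniteMeasure μ] {p : ℕ}
    (hindep : iIndepFun X μ) (hident : ∀ i, IdentDistrib (X i) (X 0) μ μ)
    (hX : MemLp (X 0) p μ) (n : ℕ) :
    ∫ ω, (∑ i ∈ range (n + 1), X i ω) ^ p ∂μ = ∑ k ∈ range (p + 1),
      (∫ ω, (∑ i ∈ range n, X i ω) ^ k ∂μ) * (∫ ω, X 0 ω ^ (p - k) ∂μ) * p.choose k := by
  have hind : IndepFun (fun ω ↦ ∑ i ∈ range n, X i ω) (X n) μ := by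
    simpa [Finset.sum_fn] using hindep.indepFun_finsetSum_of_notMem₀
      (fun i ↦ (hident i).aemeasurable_fst) notMem_range_self
  simp_rw [sum_range_succ (fun i ↦ X i _),
    hind.integral_add_pow (memLp_sum_range hident hX n) ((hident n).memLp_iff.2 hX)]
  refine sum_congr rfl fun k _ ↦ ?_
  congr 2
  exact (hident n).pow.integral_eq

variable [IsProbabilityMeasure μ]

lemma ProbabilityTheory.iIndepFun.integral_sum_range_sq (hindep : iIndepFun X μ)
    (hident : ∀ i, IdentDistrib (X i) (X 0) μ μ) (hX : MemLp (X 0) 2 μ)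
    (hmean : ∫ ω, X 0 ω ∂μ = 0) (n : ℕ) :
    ∫ ω, (∑ i ∈ range n, X i ω) ^ 2 ∂μ = n * ∫ ω, X 0 ω ^ 2 ∂μ := by
  induction n with
  | zero => simp
  | succ n ih =>
    rw [hindep.integral_sum_range_succ_pow hident hX]
    simp [sum_range_succ, ih, integral_sum_range_eq_zero hident (hX.integrable one_le_two) hmean]
    ring

lemma ProbabilityTheory.iIndepFun.integral_sum_range_pow_four (hindep : iIndepFun X μ)
    (hident : ∀ i, IdentDistrib (X i) (X 0) μ μ) (hX : MemLp (X 0) 4 μ)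
    (hmean : ∫ ω, X 0 ω ∂μ = 0) (n : ℕ) :
    ∫ ω, (∑ i ∈ range n, X i ω) ^ 4 ∂μ =
      n * ∫ ω, X 0 ω ^ 4 ∂μ + 3 * n * (n - 1) * (∫ ω, X 0 ω ^ 2 ∂μ) ^ 2 := by
  induction n with
  | zero => simp
  | succ n ih =>
    rw [hindep.integral_sum_range_succ_pow hident hX]
    simp [sum_range_succ, ih, integral_sum_range_eq_zero hident (hX.integrable (by norm_num)) hmean,
      hindep.integral_sum_range_sq hident (hX.mono_exponent (by norm_num)) hmean, hmean,
      Nat.choose]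
    ring

lemma ProbabilityTheory.iIndepFun.le_measureReal_sum_range_nonneg (hindep : iIndepFun X μ)
    (hident : ∀ i, IdentDistrib (X i) (X 0) μ μ) (hX : MemLp (X 0) 4 μ)
    (hmean : ∫ ω, X 0 ω ∂μ = 0) (n : ℕ) :
    (∫ ω, X 0 ω ^ 2 ∂μ) ^ 2 / (8 * ((∫ ω, X 0 ω ^ 4 ∂μ) + 3 * (∫ ω, X 0 ω ^ 2 ∂μ) ^ 2))
      ≤ μ.real {ω | 0 ≤ ∑ i ∈ range n, X i ω} := by
  have hm₄ : 0 ≤ ∫ ω, X 0 ω ^ 4 ∂μ := integral_nonneg fun ω ↦ by positivity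
  rcases n.eq_zero_or_pos with rfl | hn
  · simp only [range_zero, sum_empty, le_refl, Set.ofPred_true, probReal_univ]
    exact div_le_one_of_le₀ (by nlinarith) (by positivity)
  have key := sq_integral_sq_le_mul_measureReal_nonneg (memLp_sum_range hident hX n)
    (integral_sum_range_eq_zero hident (hX.integrable (by norm_num)) hmean n)
  rw [hindep.integral_sum_range_sq hident (hX.mono_exponent (by norm_num)) hmean,
    hindep.integral_sum_range_pow_four hident hX hmean] at key
  have hP : 0 ≤ μ.real {ω | 0 ≤ ∑ i ∈ range n, X i ω} := measureReal_nonneg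
  have hn : (1 : ℝ) ≤ n := by exact_mod_cast hn
  generalize ∫ ω, X 0 ω ^ 2 ∂μ = m₂ at *
  generalize ∫ ω, X 0 ω ^ 4 ∂μ = m₄ at *
  generalize μ.real {ω | 0 ≤ ∑ i ∈ range n, X i ω} = P at *
  have hq : n * m₄ + 3 * n * (n - 1) * m₂ ^ 2 ≤ n ^ 2 * (m₄ + 3 * m₂ ^ 2) := by
    have : 0 ≤ (n : ℝ) * (n - 1) := mul_nonneg (by linarith) (by linarith)
    nlinarith [mul_nonneg this hm₄]
  have h : (n : ℝ) ^ 2 * m₂ ^ 2 ≤ n ^ 2 * (P * (8 * (m₄ + 3 * m₂ ^ 2))) := by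
    nlinarith [mul_le_mul_of_nonneg_right hq hP]
  exact div_le_of_le_mul₀ (by positivity) hP (le_of_mul_le_mul_left h (by positivity))

end PartialSums

/-- For an i.i.d. sequence of mean-zero, bounded random variables, there is a
uniform constant C > 0 lower-bounding P(X₁ + ⋯ + Xₙ ≥ 0) for all n. -/
theorem iid_partial_sum_nonneg_prob_bounded_below
    {Ω : Type*} [MeasureSpace Ω] [IsProbabilityMeasure (ℙ : Measure Ω)]
    (X : ℕ → Ω → ℝ)
    (hmeas : ∀ i, Measurable (X i))
    (hindep : iIndepFun X ℙ)
    (hident : ∀ i, Measure.map (X i) ℙ = Measure.map (X 0) ℙ)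
    (B : ℝ) (hbdd : ∀ i ω, |X i ω| ≤ B)
    (hmean : (∫ ω, X 0 ω) = 0) :
    ∃ C > (0 : ℝ), ∀ n : ℕ,
      C ≤ (ℙ {ω | 0 ≤ ∑ i ∈ Finset.range n, X i ω}).toReal := by
  have hident' (i : ℕ) : IdentDistrib (X i) (X 0) ℙ ℙ :=
    ⟨(hmeas i).aemeasurable, (hmeas 0).aemeasurable, hident i⟩
  have hX : MemLp (X 0) 4 ℙ := .of_bound (hmeas 0).aestronglyMeasurable B (ae_of_all _ (hbdd 0))
  have hX₂ : MemLp (X 0) 2 ℙ := hX.mono_exponent (by norm_num)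
  rcases (integral_nonneg fun ω ↦ sq_nonneg (X 0 ω) : 0 ≤ ∫ ω, X 0 ω ^ 2).eq_or_lt with hm₂ | hm₂
  · refine ⟨1, one_pos, fun n ↦ (measureReal_nonneg_eq_one_of_integral_sq_eq_zero
      (memLp_sum_range hident' hX₂ n) ?_).ge⟩
    rw [hindep.integral_sum_range_sq hident' hX₂ hmean, ← hm₂, mul_zero]
  have hm₄ : 0 ≤ ∫ ω, X 0 ω ^ 4 := integral_nonneg fun ω ↦ by positivity
  exact ⟨_, by positivity, hindep.le_measureReal_sum_range_nonneg hident' hX hmean⟩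
end

section
/- Let P₁, …, P_K be finitely many mean-zero distributions on ℝ with bounded support, and for each k let (X_i^{(k)})_{i≥1} be i.i.d. with law P_k, with the K families mutually independent. Then there exists a constant C > 0 such that for all choices of nonnegative integers L₁, …, L_K, P(Σ_{k=1}^K Σ_{i=1}^{L_k} X_i^{(k)} ≥ 0) > C. -/
/-!
Write `S` for the total sum. It is a finite sum of independent, bounded, mean-zero variables, so
`E S² = V` is the sum of their variances, and expanding the fourth power gives
`E S⁴ ≤ 3 V² + B² V`. A mean-zero `S` satisfies `E|S| = 2 E[S; S ≥ 0] ≤ 2 √(P(S ≥ 0) E S²)`, and by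
Cauchy–Schwarz applied twice `(E S²)³ ≤ (E|S|)² E S⁴`. Together these give the Paley–Zygmund-type
bound `V² ≤ 4 P(S ≥ 0) E S⁴`, hence `P(S ≥ 0) ≥ V / (12 V + 4 B²)`. Each variance is either `0` or
at least the smallest positive variance `m` among the `K` laws. So either `V = 0`, in which case
`S = 0` almost surely, or `V ≥ m`. In both cases `P(S ≥ 0) ≥ m / (12 m + 4 B²)`.
-/

open MeasureTheory ProbabilityTheory
open scoped ProbabilityTheory

theorem Finite.exists_pos_forall_nonpos_or_le {ι : Type*} [Finite ι] (v : ι → ℝ) :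
    ∃ m > 0, ∀ i, v i ≤ 0 ∨ m ≤ v i := by
  -- `none` supplies the value `1`, so the minimum exists even if no `v i` is positive.
  obtain ⟨j, hj⟩ :=
    Finite.exists_min fun j : Option ι => j.elim 1 fun i => if 0 < v i then v i else 1
  refine ⟨_, ?_, fun i => (le_or_gt (v i) 0).imp_right fun hi => by simpa [hi] using hj (some i)⟩
  rcases j with _ | i
  · exact one_pos
  · dsimp only [Option.elim]
    split_ifs with h
    exacts [h, one_pos]

theorem Finset.sum_eq_zero_or_le_sum {ι : Type*} {s : Finset ι} {f : ι → ℝ} {m : ℝ}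
    (hf : ∀ i ∈ s, 0 ≤ f i) (hm : ∀ i ∈ s, f i ≤ 0 ∨ m ≤ f i) :
    ∑ i ∈ s, f i = 0 ∨ m ≤ ∑ i ∈ s, f i := by
  by_cases hzero : ∀ i ∈ s, f i = 0
  · exact Or.inl (Finset.sum_eq_zero hzero)
  · push Not at hzero
    obtain ⟨i, hi, hne⟩ := hzero
    refine Or.inr (((hm i hi).resolve_left fun h => hne (le_antisymm h (hf i hi))).trans ?_)
    exact Finset.single_le_sum hf hi

namespace MeasureTheory

variable {Ω : Type*} {mΩ : MeasurableSpace Ω} {μ : Measure Ω}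

theorem sq_integral_mul_le_integral_sq_mul_integral_sq {f g : Ω → ℝ} (hf : MemLp f 2 μ)
    (hg : MemLp g 2 μ) :
    (∫ ω, f ω * g ω ∂μ) ^ 2 ≤ (∫ ω, f ω ^ 2 ∂μ) * ∫ ω, g ω ^ 2 ∂μ := by
  have h := real_inner_mul_inner_self_le (hf.toLp f) (hg.toLp g)
  have hinner : ∀ {u v : Ω → ℝ} (hu : MemLp u 2 μ) (hv : MemLp v 2 μ),
      inner ℝ (hu.toLp u) (hv.toLp v) = ∫ ω, u ω * v ω ∂μ := by
    intro u v hu hv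
    rw [L2.inner_def]
    refine integral_congr_ae ?_
    filter_upwards [hu.coeFn_toLp, hv.coeFn_toLp] with ω hu hv
    simp [hu, hv, mul_comm]
  rw [hinner hf hg, hinner hf hf, hinner hg hg] at h
  simpa [sq] using h

theorem MemLp.integrable_pow [IsFiniteMeasure μ] {X : Ω → ℝ} {p : ℕ} (hX : MemLp X p μ) {k : ℕ}
    (hk : k ≤ p) : Integrable (fun ω => X ω ^ k) μ :=
  (hX.mono_exponent (by exact_mod_cast hk)).integrable_norm_pow'.mono
    (hX.aestronglyMeasurable.pow k) (ae_of_all _ fun ω => by simp [norm_pow])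

theorem integral_pow_four_le_sq_mul_integral_sq {Y : Ω → ℝ} (hY : MemLp Y 2 μ) {B : ℝ}
    (hB : ∀ᵐ ω ∂μ, |Y ω| ≤ B) : ∫ ω, Y ω ^ 4 ∂μ ≤ B ^ 2 * ∫ ω, Y ω ^ 2 ∂μ := by
  rw [← integral_const_mul]
  refine integral_mono_of_nonneg (ae_of_all _ fun ω => by positivity)
    (hY.integrable_sq.const_mul _) ?_
  filter_upwards [hB] with ω h
  have hsq : Y ω ^ 2 ≤ B ^ 2 := by
    rw [← sq_abs]
    exact pow_le_pow_left₀ (abs_nonneg _) h 2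
  nlinarith [sq_nonneg (Y ω)]

section AntiConcentration

variable [IsFiniteMeasure μ] {S : Ω → ℝ}

theorem sq_integral_abs_le_four_mul_measureReal_mul_integral_sq (hS : MemLp S 2 μ)
    (h0 : μ[S] = 0) :
    (∫ ω, |S ω| ∂μ) ^ 2 ≤ 4 * μ.real {ω | 0 ≤ S ω} * ∫ ω, S ω ^ 2 ∂μ := by
  set A := {ω | 0 ≤ S ω}
  have hA : NullMeasurableSet A μ :=
    nullMeasurableSet_le aemeasurable_const hS.aestronglyMeasurable.aemeasurable
  have hS1 : Integrable S μ := hS.integrable one_le_two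
  have habs : ∫ ω, |S ω| ∂μ = 2 * ∫ ω in A, S ω ∂μ := by
    have hpt : ∀ ω, |S ω| = 2 * A.indicator S ω - S ω := by
      intro ω
      by_cases h : 0 ≤ S ω
      · rw [abs_of_nonneg h, Set.indicator_of_mem (show ω ∈ A from h)]
        ring
      · rw [abs_of_neg (not_le.mp h), Set.indicator_of_notMem (show ω ∉ A from h)]
        ring
    simp_rw [hpt]
    rw [integral_sub ((hS1.indicator₀ hA).const_mul 2) hS1, integral_const_mul,
      integral_indicator₀ hA, h0, sub_zero]
  have hCS := sq_integral_mul_le_integral_sq_mul_integral_sq (μ := μ.restrict A)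
    (memLp_const 1) (hS.restrict A)
  simp only [one_mul, one_pow, setIntegral_const, smul_eq_mul, mul_one] at hCS
  have hle : ∫ ω in A, S ω ^ 2 ∂μ ≤ ∫ ω, S ω ^ 2 ∂μ :=
    setIntegral_le_integral hS.integrable_sq (ae_of_all _ fun ω => sq_nonneg _)
  rw [habs]
  nlinarith [measureReal_nonneg (μ := μ) (s := A)]

theorem integral_sq_pow_three_le (hS : MemLp S 4 μ) :
    (∫ ω, S ω ^ 2 ∂μ) ^ 3 ≤ (∫ ω, |S ω| ∂μ) ^ 2 * ∫ ω, S ω ^ 4 ∂μ := by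
  have hmeas := hS.aestronglyMeasurable
  have hint : ∀ k ≤ 4, Integrable (fun ω => |S ω| ^ k) μ := fun k hk =>
    (hS.abs.integrable_pow hk).congr (ae_of_all _ fun ω => by simp)
  have hsqrt : ∀ ω, √|S ω| ^ 2 = |S ω| := fun ω => Real.sq_sqrt (abs_nonneg _)
  have hsqrt3 : ∀ ω, (√|S ω| ^ 3) ^ 2 = |S ω| ^ 3 := fun ω => by
    rw [← pow_mul, mul_comm, pow_mul, hsqrt]
  have h13 : (∫ ω, S ω ^ 2 ∂μ) ^ 2 ≤ (∫ ω, |S ω| ∂μ) * ∫ ω, |S ω| ^ 3 ∂μ := by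
    have h := sq_integral_mul_le_integral_sq_mul_integral_sq (μ := μ)
      (f := fun ω => √|S ω|) (g := fun ω => √|S ω| ^ 3)
      ((memLp_two_iff_integrable_sq (by fun_prop)).2
        (by simpa only [hsqrt, pow_one] using hint 1 (by norm_num)))
      ((memLp_two_iff_integrable_sq (by fun_prop)).2
        (by simpa only [hsqrt3] using hint 3 (by norm_num)))
    have hprod : ∀ ω, √|S ω| * √|S ω| ^ 3 = S ω ^ 2 := fun ω => by
      rw [← pow_succ', pow_mul' _ 2 2, hsqrt, sq_abs]
    simpa only [hprod, hsqrt, hsqrt3] using h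
  have h24 : (∫ ω, |S ω| ^ 3 ∂μ) ^ 2 ≤ (∫ ω, S ω ^ 2 ∂μ) * ∫ ω, S ω ^ 4 ∂μ := by
    have h := sq_integral_mul_le_integral_sq_mul_integral_sq (μ := μ)
      (f := fun ω => |S ω|) (g := fun ω => S ω ^ 2)
      (hS.abs.mono_exponent (by norm_num))
      ((memLp_two_iff_integrable_sq (by fun_prop)).2
        (by simpa only [← pow_mul] using hS.integrable_pow le_rfl))
    have hprod : ∀ ω, |S ω| * S ω ^ 2 = |S ω| ^ 3 := fun ω => by
      rw [← sq_abs]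
      ring
    simpa only [hprod, sq_abs, ← pow_mul] using h
  have hb : 0 ≤ ∫ ω, S ω ^ 2 ∂μ := integral_nonneg fun ω => sq_nonneg _
  have hd : 0 ≤ ∫ ω, S ω ^ 4 ∂μ := integral_nonneg fun ω => by positivity
  rcases hb.eq_or_lt with hb0 | hbpos
  · rw [← hb0, zero_pow three_ne_zero]
    positivity
  · have h4 : (∫ ω, S ω ^ 2 ∂μ) ^ 4 ≤
        (∫ ω, |S ω| ∂μ) ^ 2 * ((∫ ω, S ω ^ 2 ∂μ) * ∫ ω, S ω ^ 4 ∂μ) :=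
      calc _ = ((∫ ω, S ω ^ 2 ∂μ) ^ 2) ^ 2 := by ring
        _ ≤ ((∫ ω, |S ω| ∂μ) * ∫ ω, |S ω| ^ 3 ∂μ) ^ 2 := pow_le_pow_left₀ (by positivity) h13 2
        _ = (∫ ω, |S ω| ∂μ) ^ 2 * (∫ ω, |S ω| ^ 3 ∂μ) ^ 2 := by ring
        _ ≤ _ := by gcongr
    nlinarith

theorem sq_integral_sq_le_four_mul_measureReal_mul_integral_pow_four (hS : MemLp S 4 μ)
    (h0 : μ[S] = 0) :
    (∫ ω, S ω ^ 2 ∂μ) ^ 2 ≤ 4 * μ.real {ω | 0 ≤ S ω} * ∫ ω, S ω ^ 4 ∂μ := by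
  have ha := sq_integral_abs_le_four_mul_measureReal_mul_integral_sq
    (hS.mono_exponent (by norm_num)) h0
  have hb := integral_sq_pow_three_le hS
  have hb0 : 0 ≤ ∫ ω, S ω ^ 2 ∂μ := integral_nonneg fun ω => sq_nonneg _
  have hd0 : 0 ≤ ∫ ω, S ω ^ 4 ∂μ := integral_nonneg fun ω => by positivity
  have hP0 : 0 ≤ μ.real {ω | 0 ≤ S ω} := measureReal_nonneg
  rcases hb0.eq_or_lt with hb0 | hbpos
  · rw [← hb0, zero_pow two_ne_zero]
    positivity
  · nlinarith [mul_le_mul_of_nonneg_right ha hd0]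

end AntiConcentration

theorem div_le_measureReal_nonneg [IsProbabilityMeasure μ] {S : Ω → ℝ} (hS : MemLp S 4 μ)
    (h0 : μ[S] = 0) {m c : ℝ} (hm : 0 < m) (hc : 0 ≤ c)
    (hV : ∫ ω, S ω ^ 2 ∂μ = 0 ∨ m ≤ ∫ ω, S ω ^ 2 ∂μ)
    (h4 : ∫ ω, S ω ^ 4 ∂μ ≤ 3 * (∫ ω, S ω ^ 2 ∂μ) ^ 2 + c * ∫ ω, S ω ^ 2 ∂μ) :
    m / (12 * m + 4 * c) ≤ μ.real {ω | 0 ≤ S ω} := by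
  rw [div_le_iff₀ (by positivity)]
  rcases hV with hV | hV
  · have hS0 : ∀ᵐ ω ∂μ, 0 ≤ S ω := by
      filter_upwards [(integral_eq_zero_iff_of_nonneg (fun ω => sq_nonneg (S ω))
        (hS.integrable_pow (by norm_num))).1 hV] with ω hω
      simp_all
    have hone : μ.real {ω | 0 ≤ S ω} = 1 := by
      have hcompl : μ {ω | 0 ≤ S ω}ᶜ = 0 := ae_iff.1 hS0
      rw [measureReal_congr (ae_eq_univ.2 hcompl), probReal_univ]
    rw [hone]
    linarith
  · have hPZ := sq_integral_sq_le_four_mul_measureReal_mul_integral_pow_four hS h0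
    set P := μ.real {ω | 0 ≤ S ω}
    set V := ∫ ω, S ω ^ 2 ∂μ
    have hP0 : 0 ≤ P := measureReal_nonneg
    have hVpos : 0 < V := hm.trans_le hV
    have hVP : V ≤ P * (12 * V + 4 * c) := by
      refine le_of_mul_le_mul_left ?_ hVpos
      nlinarith [mul_le_mul_of_nonneg_left h4 (by positivity : 0 ≤ 4 * P)]
    rcases le_or_gt 1 (12 * P) with hP | hP
    · nlinarith
    · nlinarith [mul_le_mul_of_nonneg_right hV (by linarith : 0 ≤ 1 - 12 * P)]

end MeasureTheory

namespace ProbabilityTheory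

variable {Ω : Type*} {mΩ : MeasurableSpace Ω} {μ : Measure Ω}

theorem IndepFun.integral_add_pow_s9 [IsFiniteMeasure μ] {X Y : Ω → ℝ} (hXY : IndepFun X Y μ)
    {n : ℕ} (hX : MemLp X n μ) (hY : MemLp Y n μ) :
    ∫ ω, (X ω + Y ω) ^ n ∂μ =
      ∑ k ∈ Finset.range (n + 1), (∫ ω, X ω ^ k ∂μ) * (∫ ω, Y ω ^ (n - k) ∂μ) * n.choose k := by
  have hterm : ∀ k ≤ n, ∀ c : ℝ,
      Integrable (fun ω => X ω ^ k * Y ω ^ (n - k) * c) μ ∧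
      ∫ ω, X ω ^ k * Y ω ^ (n - k) * c ∂μ =
        (∫ ω, X ω ^ k ∂μ) * (∫ ω, Y ω ^ (n - k) ∂μ) * c := by
    intro k hk c
    have hind : IndepFun (fun ω => X ω ^ k) (fun ω => Y ω ^ (n - k)) μ :=
      hXY.comp (measurable_id.pow_const k) (measurable_id.pow_const (n - k))
    refine ⟨(hind.integrable_mul (hX.integrable_pow hk)
      (hY.integrable_pow (Nat.sub_le n k))).mul_const c, ?_⟩
    rw [integral_mul_const, hind.integral_fun_mul_eq_mul_integral
      (hX.aestronglyMeasurable.pow k) (hY.aestronglyMeasurable.pow _)]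
  simp_rw [add_pow]
  rw [integral_finsetSum _ fun k hk => (hterm k (Finset.mem_range_succ_iff.1 hk) _).1]
  exact Finset.sum_congr rfl fun k hk => (hterm k (Finset.mem_range_succ_iff.1 hk) _).2

theorem IndepFun.integral_add_pow_four_of_integral_eq_zero [IsProbabilityMeasure μ]
    {X Y : Ω → ℝ} (hXY : IndepFun X Y μ) (hX : MemLp X 4 μ) (hY : MemLp Y 4 μ)
    (hX0 : μ[X] = 0) (hY0 : μ[Y] = 0) :
    ∫ ω, (X ω + Y ω) ^ 4 ∂μ =
      ∫ ω, X ω ^ 4 ∂μ + 6 * (∫ ω, X ω ^ 2 ∂μ) * (∫ ω, Y ω ^ 2 ∂μ) + ∫ ω, Y ω ^ 4 ∂μ := by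
  rw [hXY.integral_add_pow_s9 (n := 4) hX hY]
  simp only [Finset.sum_range_succ, Finset.range_one, Finset.sum_singleton, pow_zero,
    integral_const, probReal_univ, smul_eq_mul, Nat.choose, Nat.cast_one, pow_one, hX0, hY0,
    Nat.cast_ofNat, Nat.reduceAdd, Nat.reduceSub, tsub_zero, tsub_self]
  ring

section Family

variable {ι : Type*} {Y : ι → Ω → ℝ}

theorem integral_finsetSum_eq_zero (h1 : ∀ i, Integrable (Y i) μ) (h0 : ∀ i, μ[Y i] = 0)
    (s : Finset ι) : ∫ ω, ∑ i ∈ s, Y i ω ∂μ = 0 := by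
  rw [integral_finsetSum _ fun i _ => h1 i]
  exact Finset.sum_eq_zero fun i _ => h0 i

variable [IsProbabilityMeasure μ]

theorem iIndepFun.integral_sum_sq (hY : iIndepFun Y μ) (h2 : ∀ i, MemLp (Y i) 2 μ)
    (h0 : ∀ i, μ[Y i] = 0) (s : Finset ι) :
    ∫ ω, (∑ i ∈ s, Y i ω) ^ 2 ∂μ = ∑ i ∈ s, ∫ ω, Y i ω ^ 2 ∂μ := by
  have hsum0 : μ[∑ i ∈ s, Y i] = 0 := by
    simpa only [Finset.sum_apply] using
      integral_finsetSum_eq_zero (fun i => (h2 i).integrable one_le_two) h0 s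
  have hvar := IndepFun.variance_sum (s := s) (fun i _ => h2 i)
    fun i _ j _ hij => hY.indepFun hij
  rw [variance_of_integral_eq_zero (memLp_finsetSum' s fun i _ => h2 i).aemeasurable hsum0]
    at hvar
  simpa [variance_of_integral_eq_zero (h2 _).aemeasurable (h0 _), Finset.sum_apply] using hvar

theorem iIndepFun.integral_sum_pow_four_le (hY : iIndepFun Y μ) (h4 : ∀ i, MemLp (Y i) 4 μ)
    (h0 : ∀ i, μ[Y i] = 0) {c : ℝ} (hc : ∀ i, ∫ ω, Y i ω ^ 4 ∂μ ≤ c * ∫ ω, Y i ω ^ 2 ∂μ)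
    (s : Finset ι) :
    ∫ ω, (∑ i ∈ s, Y i ω) ^ 4 ∂μ ≤
      3 * (∑ i ∈ s, ∫ ω, Y i ω ^ 2 ∂μ) ^ 2 + c * ∑ i ∈ s, ∫ ω, Y i ω ^ 2 ∂μ := by
  classical
  induction s using Finset.induction_on with
  | empty => simp
  | insert i s hi ih =>
    have hind : IndepFun (fun ω => ∑ j ∈ s, Y j ω) (Y i) μ := by
      rw [← Finset.sum_fn]
      exact hY.indepFun_finsetSum_of_notMem₀ (fun j => (h4 j).aemeasurable) hi
    have hS4 : MemLp (fun ω => ∑ j ∈ s, Y j ω) 4 μ := memLp_finsetSum s fun j _ => h4 j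
    have hS0 := integral_finsetSum_eq_zero (fun j => (h4 j).integrable (by norm_num)) h0 s
    have hS2 := hY.integral_sum_sq (fun j => (h4 j).mono_exponent (by norm_num)) h0 s
    have hτ : 0 ≤ ∫ ω, Y i ω ^ 2 ∂μ := integral_nonneg fun ω => sq_nonneg _
    simp only [Finset.sum_insert hi, add_comm (Y i _)]
    rw [hind.integral_add_pow_four_of_integral_eq_zero hS4 (h4 i) hS0 (h0 i), hS2]
    nlinarith [hc i]

theorem iIndepFun.div_le_measureReal_sum_nonneg (hY : iIndepFun Y μ)
    (h4 : ∀ i, MemLp (Y i) 4 μ) (h0 : ∀ i, μ[Y i] = 0) {c m : ℝ} (hc0 : 0 ≤ c)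
    (hc : ∀ i, ∫ ω, Y i ω ^ 4 ∂μ ≤ c * ∫ ω, Y i ω ^ 2 ∂μ) (hm : 0 < m)
    (hm2 : ∀ i, ∫ ω, Y i ω ^ 2 ∂μ ≤ 0 ∨ m ≤ ∫ ω, Y i ω ^ 2 ∂μ) (s : Finset ι) :
    m / (12 * m + 4 * c) ≤ μ.real {ω | 0 ≤ ∑ i ∈ s, Y i ω} := by
  have h2 := hY.integral_sum_sq (fun i => (h4 i).mono_exponent (by norm_num)) h0 s
  refine div_le_measureReal_nonneg (memLp_finsetSum s fun i _ => h4 i)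
    (integral_finsetSum_eq_zero (fun i => (h4 i).integrable (by norm_num)) h0 s) hm hc0 ?_ ?_
  · rw [h2]
    exact Finset.sum_eq_zero_or_le_sum (fun i _ => integral_nonneg fun ω => sq_nonneg _)
      fun i _ => hm2 i
  · rw [h2]
    exact hY.integral_sum_pow_four_le h4 h0 hc s

end Family

end ProbabilityTheory

theorem families_partial_sum_nonneg_prob_bounded_below_general
    {Ω : Type*} [MeasureSpace Ω] [IsProbabilityMeasure (ℙ : Measure Ω)]
    (K : ℕ)
    (X : Fin K → ℕ → Ω → ℝ)
    (hmeas : ∀ k i, Measurable (X k i))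
    (hindep : iIndepFun
      (fun p : Fin K × ℕ => X p.1 p.2) ℙ)
    (hident : ∀ k i, Measure.map (X k i) ℙ = Measure.map (X k 0) ℙ)
    (B : ℝ) (hbdd : ∀ k i ω, |X k i ω| ≤ B)
    (hmean : ∀ k, (∫ ω, X k 0 ω) = 0) :
    ∃ C > (0 : ℝ), ∀ L : Fin K → ℕ,
      C < (ℙ {ω | 0 ≤ ∑ k : Fin K, ∑ i ∈ Finset.range (L k), X k i ω}).toReal := by
  have hid : ∀ k i, IdentDistrib (X k i) (X k 0) ℙ ℙ := fun k i =>
    ⟨(hmeas k i).aemeasurable, (hmeas k 0).aemeasurable, hident k i⟩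
  have hX4 : ∀ k i, MemLp (X k i) 4 ℙ := fun k i =>
    (memLp_top_of_bound (hmeas k i).aestronglyMeasurable B
      (ae_of_all _ fun ω => by simpa using hbdd k i ω)).mono_exponent le_top
  have hvar : ∀ k i, ∫ ω, X k i ω ^ 2 = ∫ ω, X k 0 ω ^ 2 := fun k i =>
    ((hid k i).comp (by fun_prop : Measurable fun x : ℝ => x ^ 2)).integral_eq
  obtain ⟨m, hm, hmv⟩ := Finite.exists_pos_forall_nonpos_or_le fun k => ∫ ω, X k 0 ω ^ 2
  refine ⟨m / (12 * m + 4 * B ^ 2) / 2, by positivity, fun L => ?_⟩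
  let r : Finset (Fin K × ℕ) := Finset.univ.biUnion fun k => {k} ×ˢ Finset.range (L k)
  have hsum : ∀ ω, ∑ k, ∑ i ∈ Finset.range (L k), X k i ω = ∑ p ∈ r, X p.1 p.2 ω := fun ω =>
    (Finset.sum_finset_product' r _ _ (by simp [r])).symm
  simp only [hsum, ← measureReal_def]
  exact (half_lt_self (by positivity)).trans_le <|
    hindep.div_le_measureReal_sum_nonneg (fun p => hX4 p.1 p.2)
      (fun p => (hid p.1 p.2).integral_eq.trans (hmean p.1)) (sq_nonneg B)
      (fun p => integral_pow_four_le_sq_mul_integral_sq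
        ((hX4 p.1 p.2).mono_exponent (by norm_num)) (ae_of_all _ (hbdd p.1 p.2))) hm
      (fun p => hvar p.1 p.2 ▸ hmv p.1) r

/-- Lemma: K families of i.i.d. mean-zero bounded random variables,
mutually independent, admit a uniform constant C > 0 such that for all choices
of numbers of summands L₁,…,L_K, the probability that the total sum is
nonnegative exceeds C. -/
theorem families_partial_sum_nonneg_prob_bounded_below
    {Ω : Type*} [MeasureSpace Ω] [IsProbabilityMeasure (ℙ : Measure Ω)]
    (K : ℕ) (hK : 0 < K)
    (X : Fin K → ℕ → Ω → ℝ)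
    (hmeas : ∀ k i, Measurable (X k i))
    (hindep : iIndepFun
      (fun p : Fin K × ℕ => X p.1 p.2) ℙ)
    (hident : ∀ k i, Measure.map (X k i) ℙ = Measure.map (X k 0) ℙ)
    (B : ℝ) (hbdd : ∀ k i ω, |X k i ω| ≤ B)
    (hmean : ∀ k, (∫ ω, X k 0 ω) = 0) :
    ∃ C > (0 : ℝ), ∀ L : Fin K → ℕ,
      C < (ℙ {ω | 0 ≤ ∑ k : Fin K, ∑ i ∈ Finset.range (L k), X k i ω}).toReal :=
  families_partial_sum_nonneg_prob_bounded_below_general K X hmeas hindep hident B hbdd hmean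
end

section
/- In the update system where the actual queue satisfies Q(t+1) = Q(t) + a(t) when the scheduled activity is infeasible and otherwise evolves identically to Q^inter, and the intermediate queue evolves by Q^inter(t+1) = max(Q^inter(t) − μ_out(t), 0) + μ_in(t) with μ_out(t), μ_in(t) ∈ {0,1} plus arrivals, the per-step change of the absolute difference |Q(t+1) − Q^inter(t+1)| − |Q(t) − Q^inter(t)| is at most 1, and equals at most 0 whenever the scheduled service activity at time t is feasible. Consequently |Q(t) − Q^inter(t)| ≤ Σ_{τ=1}^{t−1} 1{the activity scheduled at τ is infeasible}. -/
open scoped Classical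

/-- Actual vs. intermediate queue: when the scheduled activity is feasible,
both queues update by the (1-Lipschitz) truncated rule
x ↦ max(x − μ_out, 0) + s + a; when infeasible the actual queue only receives
the arrivals a(t).  Here μ_out(t), s(t) ∈ {0,1} (realized departures and
service arrivals), a(t) ≥ 0 are external arrivals.  Then each step changes
|Q − Q^inter| by at most 1, by at most 0 on feasible slots, and hence
|Q(t) − Q^inter(t)| ≤ #{τ < t : the activity scheduled at τ is infeasible}. -/
theorem actual_vs_intermediate_queue_gap
    (Q Qi a μout s : ℕ → ℝ) (feasible : ℕ → Prop)
    (hinit : Q 1 = Qi 1)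
    (hμout : ∀ t, μout t = 0 ∨ μout t = 1)
    (hs : ∀ t, s t = 0 ∨ s t = 1)
    (ha : ∀ t, 0 ≤ a t)
    (hQi : ∀ t, Qi (t + 1) = max (Qi t - μout t) 0 + s t + a t)
    (hQ : ∀ t, Q (t + 1) =
      if feasible t then max (Q t - μout t) 0 + s t + a t else Q t + a t) :
    (∀ t, |Q (t + 1) - Qi (t + 1)| - |Q t - Qi t| ≤ 1)
    ∧ (∀ t, feasible t → |Q (t + 1) - Qi (t + 1)| - |Q t - Qi t| ≤ 0)
    ∧ (∀ t, 1 ≤ t → |Q t - Qi t| ≤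
        ∑ τ ∈ Finset.Ico 1 t, (if feasible τ then (0 : ℝ) else 1)) := by
  -- feasible-step bound (holds for every t)
  have hfeas : ∀ t, feasible t → |Q (t + 1) - Qi (t + 1)| - |Q t - Qi t| ≤ 0 := by
    intro t ht
    have hq := hQ t
    rw [if_pos ht] at hq
    have h1 : |Q (t + 1) - Qi (t + 1)|
        = |max (Q t - μout t) 0 - max (Qi t - μout t) 0| := by
      rw [hq, hQi t]; ring_nf
    have h2 := abs_max_sub_max_le_abs (Q t - μout t) (Qi t - μout t) 0
    have h3 : Q t - μout t - (Qi t - μout t) = Q t - Qi t := by ring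
    rw [h3] at h2
    rw [h1]; linarith
  -- intermediate queue is nonnegative after one step
  have hQiNN : ∀ t, 0 ≤ Qi (t + 1) := by
    intro t
    rw [hQi t]
    have h1 : (0 : ℝ) ≤ max (Qi t - μout t) 0 := le_max_right _ _
    have h2 : (0 : ℝ) ≤ s t := by rcases hs t with h | h <;> rw [h] <;> norm_num
    linarith [ha t]
  -- general per-step bound
  have hstep : ∀ t, |Q (t + 1) - Qi (t + 1)| - |Q t - Qi t| ≤ 1 := by
    intro t
    by_cases ht : feasible t
    · linarith [hfeas t ht]
    · have hq := hQ t
      rw [if_neg ht] at hq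
      match t with
      | 0 =>
        have : |Q 1 - Qi 1| = 0 := by rw [hinit]; simp
        linarith [abs_nonneg (Q 0 - Qi 0)]
      | n + 1 =>
        have hNN : 0 ≤ Qi (n + 1) := hQiNN n
        set t := n + 1
        set M := max (Qi t - μout t) 0 with hM
        have hM1 : (0 : ℝ) ≤ M := le_max_right _ _
        have hM2 : Qi t - μout t ≤ M := le_max_left _ _
        have hM3 : M ≤ Qi t := by
          apply max_le _ hNN
          rcases hμout t with h | h <;> rw [h] <;> linarith
        have hμ1 : μout t ≤ 1 := by rcases hμout t with h | h <;> rw [h] <;> norm_num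
        have hs0 : 0 ≤ s t ∧ s t ≤ 1 := by
          rcases hs t with h | h <;> rw [h] <;> norm_num
        have hkey : |Qi t - M - s t| ≤ 1 := by
          rw [abs_le]; constructor <;> [skip; skip] <;> nlinarith [hs0.1, hs0.2]
        have hsplit : Q (t + 1) - Qi (t + 1) = (Q t - Qi t) + (Qi t - M - s t) := by
          rw [hq, hQi t, ← hM]; ring
        calc |Q (t + 1) - Qi (t + 1)| - |Q t - Qi t|
            ≤ (|Q t - Qi t| + |Qi t - M - s t|) - |Q t - Qi t| := by
              rw [hsplit]; linarith [abs_add_le (Q t - Qi t) (Qi t - M - s t)]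
          _ ≤ 1 := by linarith
  refine ⟨hstep, hfeas, ?_⟩
  -- cumulative bound
  have hcum : ∀ n : ℕ, |Q (n + 1) - Qi (n + 1)| ≤
      ∑ τ ∈ Finset.Ico 1 (n + 1), (if feasible τ then (0 : ℝ) else 1) := by
    intro n
    induction n with
    | zero => simp [hinit]
    | succ n ih =>
      rw [Finset.sum_Ico_succ_top (by omega : 1 ≤ n + 1)]
      have hind : |Q (n + 2) - Qi (n + 2)| - |Q (n + 1) - Qi (n + 1)| ≤
          (if feasible (n + 1) then (0 : ℝ) else 1) := by
        by_cases h : feasible (n + 1)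
        · rw [if_pos h]; exact hfeas (n + 1) h
        · rw [if_neg h]; exact hstep (n + 1)
      linarith
  intro t ht
  obtain ⟨n, rfl⟩ : ∃ n, t = n + 1 := ⟨t - 1, by omega⟩
  exact hcum n
end

section
/- For the 2-flow broadcast erasure network, given nonnegative variables x_NC1^c, x_NC2^c, x_DX1^c, x_DX2^c, x_PM^c, x_RC^c, x_CX^c for each channel state c and rates R₁, R₂ ≥ 0, the five flow-conservation equalities (1) Σ_c f_c (x_NC1^c + x_PM^c) p_{d₁∨d₂}^c = R₁, (2) Σ_c f_c (x_NC2^c + x_PM^c) p_{d₁∨d₂}^c = R₂, (3) Σ_c f_c (x_CX^c + x_DX1^c) p_{d₁}^c = Σ_c f_c (x_NC1^c + x_RC^c) p_{d̄₁d₂}^c, (4) the symmetric version of (3), and (5) Σ_c f_c x_RC^c p_{d₁∨d₂}^c = Σ_c f_c x_PM^c p_{d₁∨d₂}^c, follow from (are implied by) the block-code capacity constraints y₅ = y₆ = y₇ = R₁+R₂, y₁ = y₃, y₂ = y₄ (with the y's defined by the stated linear forms) under the variable identification x_NC1 = x₁₈, x_NC2 = x₉, x_DX1 = x₆₃, x_DX2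 = x₉₅, x_PM = x₀, x_RC = x₂₇, x_CX = x₃₁. -/
/-- The five flow-conservation equalities of the 7-operation virtual network
follow from the block-code capacity constraints y₁ = y₃, y₂ = y₄,
y₅ = y₆ = y₇ = R₁ + R₂, under the variable identification
x_PM = x₀, x_NC2 = x₉, x_NC1 = x₁₈, x_RC = x₂₇, x_CX = x₃₁, x_DX1 = x₆₃,
x_DX2 = x₉₅.  Here p10, p01, p11 are the probabilities that (only d₁),
(only d₂), (both) receive, pd1 = p10 + p11, pd2 = p01 + p11,
por = p10 + p01 + p11. -/
theorem block_code_implies_flow_conservation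
    {CQ : Type*} [Fintype CQ]
    (f : CQ → ℝ) (hf : ∀ c, 0 < f c) (hfsum : ∑ c : CQ, f c = 1)
    (p10 p01 p11 : CQ → ℝ)
    (hp10 : ∀ c, 0 ≤ p10 c) (hp01 : ∀ c, 0 ≤ p01 c) (hp11 : ∀ c, 0 ≤ p11 c)
    (pd1 pd2 por : CQ → ℝ)
    (hpd1 : ∀ c, pd1 c = p10 c + p11 c)
    (hpd2 : ∀ c, pd2 c = p01 c + p11 c)
    (hpor : ∀ c, por c = p10 c + p01 c + p11 c)
    (x0 x9 x18 x27 x31 x63 x95 : CQ → ℝ)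
    (hx0 : ∀ c, 0 ≤ x0 c) (hx9 : ∀ c, 0 ≤ x9 c) (hx18 : ∀ c, 0 ≤ x18 c)
    (hx27 : ∀ c, 0 ≤ x27 c) (hx31 : ∀ c, 0 ≤ x31 c) (hx63 : ∀ c, 0 ≤ x63 c)
    (hx95 : ∀ c, 0 ≤ x95 c)
    (R1 R2 : ℝ) (hR1 : 0 ≤ R1) (hR2 : 0 ≤ R2)
    -- y₁ = y₃
    (h13 : ∑ c : CQ, f c * (x0 c + x9 c + x18 c + x27 c + x31 c + x63 c) * pd1 c
         = R1 + ∑ c : CQ, f c * (x0 c + x9 c) * pd1 c)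
    -- y₂ = y₄
    (h24 : ∑ c : CQ, f c * (x0 c + x9 c + x18 c + x27 c + x31 c + x95 c) * pd2 c
         = R2 + ∑ c : CQ, f c * (x0 c + x18 c) * pd2 c)
    -- y₅ = R₁ + R₂
    (h5 : ∑ c : CQ, f c * (x0 c + x9 c + x18 c + x27 c) * por c = R1 + R2)
    -- y₆ = R₁ + R₂
    (h6 : R1 + ∑ c : CQ, f c * (x0 c + x9 c) * por c = R1 + R2)
    -- y₇ = R₁ + R₂
    (h7 : R2 + ∑ c : CQ, f c * (x0 c + x18 c) * por c = R1 + R2) :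
    -- (1) NC1 + PM flow into Q¹∅ equals R₁
    (∑ c : CQ, f c * (x18 c + x0 c) * por c = R1)
    -- (2) NC2 + PM flow into Q²∅ equals R₂
    ∧ (∑ c : CQ, f c * (x9 c + x0 c) * por c = R2)
    -- (3) CX + DX1 outflow of Q¹₍₂₎ equals NC1 + RC inflow
    ∧ (∑ c : CQ, f c * (x31 c + x63 c) * pd1 c
        = ∑ c : CQ, f c * (x18 c + x27 c) * p01 c)
    -- (4) CX + DX2 outflow of Q²₍₁₎ equals NC2 + RC inflow
    ∧ (∑ c : CQ, f c * (x31 c + x95 c) * pd2 c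
        = ∑ c : CQ, f c * (x9 c + x27 c) * p10 c)
    -- (5) RC outflow of Q_mix equals PM inflow
    ∧ (∑ c : CQ, f c * x27 c * por c = ∑ c : CQ, f c * x0 c * por c) := by
  -- decomposition lemmas
  have dec2 : ∀ u v w : CQ → ℝ,
      ∑ c : CQ, f c * (u c + v c) * w c
        = (∑ c : CQ, f c * u c * w c) + ∑ c : CQ, f c * v c * w c := by
    intro u v w
    rw [← Finset.sum_add_distrib]
    exact Finset.sum_congr rfl fun c _ => by ring
  have dec4 : ∀ u v w t q : CQ → ℝ,
      ∑ c : CQ, f c * (u c + v c + w c + t c) * q c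
        = (∑ c : CQ, f c * u c * q c) + (∑ c : CQ, f c * v c * q c)
          + (∑ c : CQ, f c * w c * q c) + ∑ c : CQ, f c * t c * q c := by
    intro u v w t q
    rw [← Finset.sum_add_distrib, ← Finset.sum_add_distrib, ← Finset.sum_add_distrib]
    exact Finset.sum_congr rfl fun c _ => by ring
  have dec6 : ∀ u v w t s r q : CQ → ℝ,
      ∑ c : CQ, f c * (u c + v c + w c + t c + s c + r c) * q c
        = (∑ c : CQ, f c * u c * q c) + (∑ c : CQ, f c * v c * q c)
          + (∑ c : CQ, f c * w c * q c) + (∑ c : CQ, f c * t c * q c)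
          + (∑ c : CQ, f c * s c * q c) + ∑ c : CQ, f c * r c * q c := by
    intro u v w t s r q
    rw [← Finset.sum_add_distrib, ← Finset.sum_add_distrib, ← Finset.sum_add_distrib,
        ← Finset.sum_add_distrib, ← Finset.sum_add_distrib]
    exact Finset.sum_congr rfl fun c _ => by ring
  -- por = pd1 + p01 and por = pd2 + p10, atomically
  have por1 : ∀ u : CQ → ℝ,
      ∑ c : CQ, f c * u c * por c
        = (∑ c : CQ, f c * u c * pd1 c) + ∑ c : CQ, f c * u c * p01 c := by
    intro u
    rw [← Finset.sum_add_distrib]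
    exact Finset.sum_congr rfl fun c _ => by rw [hpor c, hpd1 c]; ring
  have por2 : ∀ u : CQ → ℝ,
      ∑ c : CQ, f c * u c * por c
        = (∑ c : CQ, f c * u c * pd2 c) + ∑ c : CQ, f c * u c * p10 c := by
    intro u
    rw [← Finset.sum_add_distrib]
    exact Finset.sum_congr rfl fun c _ => by rw [hpor c, hpd2 c]; ring
  rw [dec6 x0 x9 x18 x27 x31 x63 pd1, dec2 x0 x9 pd1] at h13
  rw [dec6 x0 x9 x18 x27 x31 x95 pd2, dec2 x0 x18 pd2] at h24
  rw [dec4 x0 x9 x18 x27 por] at h5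
  rw [dec2 x0 x9 por] at h6
  rw [dec2 x0 x18 por] at h7
  have q0a := por1 x0
  have q18a := por1 x18
  have q27a := por1 x27
  have q0b := por2 x0
  have q9b := por2 x9
  have q27b := por2 x27
  refine ⟨?_, ?_, ?_, ?_, ?_⟩
  · rw [dec2 x18 x0 por]; linarith
  · rw [dec2 x9 x0 por]; linarith
  · rw [dec2 x31 x63 pd1, dec2 x18 x27 p01]; linarith
  · rw [dec2 x31 x95 pd2, dec2 x9 x27 p10]; linarith
  · linarith
end
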